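/- (Completeness of LDQ(D^pu)-Res) Every false QBF Πφ has an LDQ(D^pu)-Res refutation. -/
import Mathlib


/-! ## Literals, clauses, DQBFs -/

structure Lit (V : Type) where
  var : V
  pos : Bool
deriving DecidableEq

def Lit.negate {V : Type} (l : Lit V) : Lit V := ⟨l.var, !l.pos⟩

abbrev Clause (V : Type) [DecidableEq V] : Type := Finset (Lit V)

/-- An S-form DQBF: universal variables `U`, existential variables `E`,
dependency sets `dep` (only meaningful on `E`), and a CNF matrix. -/
structure DQBF (V : Type) [DecidableEq V] where
  U : Finset V
  E : Finset V
  dep : V → Finset V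
  matrix : Finset (Clause V)

variable {V : Type} [DecidableEq V]

/-- Well-formedness of a DQBF. -/
def DQBF.WF (ψ : DQBF V) : Prop :=
  Disjoint ψ.U ψ.E ∧ (∀ x ∈ ψ.E, ψ.dep x ⊆ ψ.U) ∧
    ∀ C ∈ ψ.matrix, ∀ l ∈ C, l.var ∈ ψ.U ∪ ψ.E

/-- Dependency set with the convention `D_u = {u}` for universal variables. -/
def DQBF.depOf (ψ : DQBF V) (y : V) : Finset V := if y ∈ ψ.U then {y} else ψ.dep y

/-! ## Semantics -/

def Clause.Sat (β : V → Bool) (C : Clause V) : Prop := ∃ l ∈ C, β l.var = l.pos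

/-- A Skolem function set respects the dependency sets if the value of each
existential variable only depends on the assignment to its dependency set. -/
def DQBF.Respects (ψ : DQBF V) (f : V → (V → Bool) → Bool) : Prop :=
  ∀ x ∈ ψ.E, ∀ β γ : V → Bool, (∀ u ∈ ψ.dep x, β u = γ u) → f x β = f x γ

/-- The completed assignment `β ∪ f(β)`. -/
def DQBF.Completed (ψ : DQBF V) (f : V → (V → Bool) → Bool) (β : V → Bool) : V → Bool :=
  fun v => if v ∈ ψ.E then f v β else β v

def DQBF.IsModel (ψ : DQBF V) (f : V → (V → Bool) → Bool) : Prop :=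
  ψ.Respects f ∧ ∀ β : V → Bool, ∀ C ∈ ψ.matrix, Clause.Sat (ψ.Completed f β) C

def DQBF.IsTrue (ψ : DQBF V) : Prop := ∃ f, ψ.IsModel f

/-- Flip the value of variable `u` in an assignment. -/
def flipAt (u : V) (α : V → Bool) : V → Bool := fun w => if w = u then !(α w) else α w

/-- `(α, x, u)` is a dependency witness for the Skolem function set `f`. -/
def DepWitness (ψ : DQBF V) (f : V → (V → Bool) → Bool) (α : V → Bool) (x u : V) : Prop :=
  f x α ≠ f x (flipAt u α)

/-! ## Resolution paths and dependency schemes -/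

/-- The clauses of the matrix containing the literal `w`. -/
def DQBF.litClauses (ψ : DQBF V) (w : Lit V) : Finset (Clause V) :=
  ψ.matrix.filter fun C => w ∈ C

/-- `S_u`: the existential variables depending on `u`. -/
def DQBF.Sset (ψ : DQBF V) (u : V) : Finset V := ψ.E.filter fun x => u ∈ ψ.dep x

/-- `pathl^pu(w, ψ, χ, S)`: the least set of literals on `S`-variables reachable by a
`w`-pure resolution path starting from the clauses of `χ`. -/
inductive PathLPU (ψ : DQBF V) (w : Lit V) (χ : Finset (Clause V)) (S : Finset V) :
    Lit V → Prop
  | base {C : Clause V} {l : Lit V} : C ∈ χ → l ∈ C → l.var ∈ S → PathLPU ψ w χ S l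
  | step {p l : Lit V} {Ecl : Clause V} :
      PathLPU ψ w χ S p → Ecl ∈ ψ.matrix → p.negate ∈ Ecl → w.negate ∉ Ecl →
      l ∈ Ecl → l ≠ p.negate → l.var ∈ S → PathLPU ψ w χ S l

/-- `pathc^pu(w, ψ, χ, S)`: the corresponding set of reachable clauses. -/
inductive PathCPU (ψ : DQBF V) (w : Lit V) (χ : Finset (Clause V)) (S : Finset V) :
    Clause V → Prop
  | base {C : Clause V} : C ∈ χ → PathCPU ψ w χ S C
  | step {p : Lit V} {Ecl : Clause V} :
      PathLPU ψ w χ S p → Ecl ∈ ψ.matrix → p.negate ∈ Ecl → w.negate ∉ Ecl →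
      PathCPU ψ w χ S Ecl

/-- `pathl^rrs(ψ, χ, S)`: the analogous closure without the purity requirement. -/
inductive PathLRRS (ψ : DQBF V) (χ : Finset (Clause V)) (S : Finset V) : Lit V → Prop
  | base {C : Clause V} {l : Lit V} : C ∈ χ → l ∈ C → l.var ∈ S → PathLRRS ψ χ S l
  | step {p l : Lit V} {Ecl : Clause V} :
      PathLRRS ψ χ S p → Ecl ∈ ψ.matrix → p.negate ∈ Ecl →
      l ∈ Ecl → l ≠ p.negate → l.var ∈ S → PathLRRS ψ χ S l

/-- `w ⤳ l` (pure path connection). -/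
def ConnPU (ψ : DQBF V) (w l : Lit V) : Prop :=
  PathLPU ψ w (ψ.litClauses w) (ψ.Sset w.var) l

/-- `w ⤳ʳ l` (reflexive resolution path connection). -/
def ConnRRS (ψ : DQBF V) (w l : Lit V) : Prop :=
  PathLRRS ψ (ψ.litClauses w) (ψ.Sset w.var) l

/-- The pure universal dependency scheme `D^pu`. -/
def Dpu (ψ : DQBF V) (u x : V) : Prop :=
  u ∈ ψ.dep x ∧
    ((ConnPU ψ ⟨u, true⟩ ⟨x, true⟩ ∧ ConnPU ψ ⟨u, false⟩ ⟨x, false⟩) ∨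
      (ConnPU ψ ⟨u, false⟩ ⟨x, true⟩ ∧ ConnPU ψ ⟨u, true⟩ ⟨x, false⟩))

/-- The reflexive resolution path dependency scheme `D^rrs`. -/
def Drrs (ψ : DQBF V) (u x : V) : Prop :=
  u ∈ ψ.dep x ∧
    ((ConnRRS ψ ⟨u, true⟩ ⟨x, true⟩ ∧ ConnRRS ψ ⟨u, false⟩ ⟨x, false⟩) ∨
      (ConnRRS ψ ⟨u, false⟩ ⟨x, true⟩ ∧ ConnRRS ψ ⟨u, true⟩ ⟨x, false⟩))

/-- The trivial dependency scheme `D^trv`. -/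
def Dtrv (ψ : DQBF V) (u x : V) : Prop := u ∈ ψ.dep x

/-! ## LDQ(D)-Res -/

/-- Derivability of a clause in LDQ(D)-Res from the matrix of `ψ`, for a
dependency relation `D`. -/
inductive LDQDeriv (ψ : DQBF V) (D : V → V → Prop) : Clause V → Prop
  | ax {C : Clause V} : C ∈ ψ.matrix → LDQDeriv ψ D C
  | red {C : Clause V} {w : Lit V} :
      LDQDeriv ψ D (insert w C) → w.var ∈ ψ.U → w ∉ C →
      (∀ l ∈ C, l.var ∈ ψ.E → ¬ D w.var l.var) → LDQDeriv ψ D C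
  | res {Ec Fc : Clause V} {x : V} :
      x ∈ ψ.E →
      LDQDeriv ψ D (insert ⟨x, false⟩ Ec) → LDQDeriv ψ D (insert ⟨x, true⟩ Fc) →
      (⟨x, false⟩ : Lit V) ∉ Ec → (⟨x, true⟩ : Lit V) ∉ Fc →
      (∀ v ∈ Ec, v.var ∈ ψ.U → v.negate ∈ Fc → ¬ D v.var x) →
      LDQDeriv ψ D (Ec ∪ Fc)

/-- A single valid LDQ(D)-Res step, given the list of previously derived clauses. -/
def LDQStep (ψ : DQBF V) (D : V → V → Prop) (prev : List (Clause V)) (C : Clause V) : Prop :=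
  C ∈ ψ.matrix ∨
    (∃ w : Lit V, w.var ∈ ψ.U ∧ w ∉ C ∧ insert w C ∈ prev ∧
      ∀ l ∈ C, l.var ∈ ψ.E → ¬ D w.var l.var) ∨
    (∃ (x : V) (Ec Fc : Clause V), x ∈ ψ.E ∧ C = Ec ∪ Fc ∧
      (⟨x, false⟩ : Lit V) ∉ Ec ∧ (⟨x, true⟩ : Lit V) ∉ Fc ∧
      insert (⟨x, false⟩ : Lit V) Ec ∈ prev ∧ insert (⟨x, true⟩ : Lit V) Fc ∈ prev ∧
      ∀ v ∈ Ec, v.var ∈ ψ.U → v.negate ∈ Fc → ¬ D v.var x)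

/-- An LDQ(D)-Res proof: a list of clauses, each a valid step from the earlier ones. -/
def IsLDQProof (ψ : DQBF V) (D : V → V → Prop) (π : List (Clause V)) : Prop :=
  ∀ i : Fin π.length, LDQStep ψ D (π.take i.val) (π.get i)

def IsLDQRefutation (ψ : DQBF V) (D : V → V → Prop) (π : List (Clause V)) : Prop :=
  IsLDQProof ψ D π ∧ (∅ : Clause V) ∈ π

/-- A single valid Q-Res step. -/
def QResStep (ψ : DQBF V) (prev : List (Clause V)) (C : Clause V) : Prop :=
  C ∈ ψ.matrix ∨
    (∃ w : Lit V, w.var ∈ ψ.U ∧ w ∉ C ∧ w.negate ∉ C ∧ insert w C ∈ prev ∧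
      ∀ l ∈ C, l.var ∈ ψ.E → w.var ∉ ψ.dep l.var) ∨
    (∃ (x : V) (Ec Fc : Clause V), x ∈ ψ.E ∧ C = Ec ∪ Fc ∧
      (⟨x, false⟩ : Lit V) ∉ Ec ∧ (⟨x, true⟩ : Lit V) ∉ Fc ∧
      insert (⟨x, false⟩ : Lit V) Ec ∈ prev ∧ insert (⟨x, true⟩ : Lit V) Fc ∈ prev ∧
      ∀ v ∈ Ec, v.var ∈ ψ.U → v.negate ∉ Fc)

def IsQResProof (ψ : DQBF V) (π : List (Clause V)) : Prop :=
  ∀ i : Fin π.length, QResStep ψ (π.take i.val) (π.get i)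

def IsQResRefutation (ψ : DQBF V) (π : List (Clause V)) : Prop :=
  IsQResProof ψ π ∧ (∅ : Clause V) ∈ π

/-! ## QBFs: DQBFs with a linear quantifier prefix -/

structure QBF (V : Type) [DecidableEq V] extends DQBF V where
  ord : V → ℕ

/-- Well-formedness of a QBF: dependency sets are induced by the prefix order. -/
def QBF.WF (ψ : QBF V) : Prop :=
  ψ.toDQBF.WF ∧
    (∀ a ∈ ψ.U ∪ ψ.E, ∀ b ∈ ψ.U ∪ ψ.E, ψ.ord a = ψ.ord b → a = b) ∧
    ∀ x ∈ ψ.E, ∀ u, u ∈ ψ.dep x ↔ u ∈ ψ.U ∧ ψ.ord u < ψ.ord x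

/-! ## IndExt-QU-Res -/

/-- The clause `¬α` of negations of the literals of a partial assignment `α`. -/
def negAssign (α : Finset (Lit V)) : Clause V := α.image Lit.negate

/-- Size of a DQBF. -/
def DQBF.size (ψ : DQBF V) : ℕ := ψ.U.card + ψ.E.card + ∑ C ∈ ψ.matrix, (C.card + 1)

/-- IndExt-QU-Res derivations: from the DQBF `ψ0`, reach a (possibly extended)
prefix together with a set of derived clauses, in the given number of steps. -/
inductive IndExtDeriv (ψ0 : DQBF V) : DQBF V → Finset (Clause V) → ℕ → Prop
  | start : IndExtDeriv ψ0 ψ0 ψ0.matrix 0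
  | res {ψ : DQBF V} {Γ : Finset (Clause V)} {n : ℕ} {Ec Fc : Clause V} {x : V} :
      IndExtDeriv ψ0 ψ Γ n → x ∈ ψ.E →
      (⟨x, false⟩ : Lit V) ∉ Ec → (⟨x, true⟩ : Lit V) ∉ Fc →
      insert (⟨x, false⟩ : Lit V) Ec ∈ Γ → insert (⟨x, true⟩ : Lit V) Fc ∈ Γ →
      IndExtDeriv ψ0 ψ (insert (Ec ∪ Fc) Γ) (n + 1)
  | red {ψ : DQBF V} {Γ : Finset (Clause V)} {n : ℕ} {C : Clause V} {w : Lit V} :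
      IndExtDeriv ψ0 ψ Γ n → insert w C ∈ Γ → w.var ∈ ψ.U → w ∉ C → w.negate ∉ C →
      (∀ l ∈ C, l.var ∈ ψ.E → w.var ∉ ψ.dep l.var) →
      IndExtDeriv ψ0 ψ (insert C Γ) (n + 1)
  | ext {ψ : DQBF V} {Γ : Finset (Clause V)} {n : ℕ} (α : Finset (Lit V)) (y1 y2 v : V) :
      IndExtDeriv ψ0 ψ Γ n →
      (∀ a ∈ α, a.var ∈ ψ.U) → v ∉ ψ.U ∪ ψ.E → y1 ∈ ψ.U ∪ ψ.E → y2 ∈ ψ.U ∪ ψ.E →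
      IndExtDeriv ψ0
        ⟨ψ.U, insert v ψ.E,
          Function.update ψ.dep v ((ψ.depOf y1 ∪ ψ.depOf y2) \ α.image Lit.var), ψ.matrix⟩
        (insert (negAssign α ∪ ({⟨v, true⟩, ⟨y1, true⟩} : Clause V))
          (insert (negAssign α ∪ ({⟨v, true⟩, ⟨y2, true⟩} : Clause V))
            (insert (negAssign α ∪ ({⟨v, false⟩, ⟨y1, false⟩, ⟨y2, false⟩} : Clause V)) Γ)))
        (n + 1)
  | weakU {ψ : DQBF V} {Γ : Finset (Clause V)} {n : ℕ} (v : V) :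
      IndExtDeriv ψ0 ψ Γ n → v ∉ ψ.U ∪ ψ.E →
      IndExtDeriv ψ0 ⟨insert v ψ.U, ψ.E, ψ.dep, ψ.matrix⟩ Γ (n + 1)
  | weakE {ψ : DQBF V} {Γ : Finset (Clause V)} {n : ℕ} (v : V) (Dv : Finset V) :
      IndExtDeriv ψ0 ψ Γ n → v ∉ ψ.U ∪ ψ.E → Dv ⊆ ψ.U →
      IndExtDeriv ψ0 ⟨ψ.U, insert v ψ.E, Function.update ψ.dep v Dv, ψ.matrix⟩ Γ (n + 1)

/-- Substituting variables in a clause. -/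
def Clause.subst (σ : V → V) (C : Clause V) : Clause V :=
  C.image fun l => (⟨σ l.var, l.pos⟩ : Lit V)

/-! ## Unit propagation, outer variables, and DQRAT(D^pu) -/

/-- Literals derivable by unit propagation from a (possibly infinite) clause set. -/
inductive UPLit (Φ : Set (Clause V)) : Lit V → Prop
  | unit {C : Clause V} {l : Lit V} : C ∈ Φ → l ∈ C →
      (∀ l' ∈ C, l' ≠ l → UPLit Φ l'.negate) → UPLit Φ l

/-- `Φ ⊢₁ ⊥`: unit propagation derives a conflict. -/
def UPBot (Φ : Set (Clause V)) : Prop := ∃ C ∈ Φ, ∀ l ∈ C, UPLit Φ l.negate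

/-- The unit clauses negating the literals of `C`. -/
def negUnits (C : Clause V) : Set (Clause V) := {D | ∃ l ∈ C, D = ({l.negate} : Clause V)}

def DQBF.Inner (ψ : DQBF V) (u : V) : Set V := {y | y ∈ ψ.E ∧ u ∈ ψ.dep y}

/-- The set of outer variables of a variable. -/
def DQBF.Outer (ψ : DQBF V) (x : V) : Set V :=
  if x ∈ ψ.U then
    {x} ∪ ((↑(ψ.U ∪ ψ.E) : Set V) ∩ ⋂ z ∈ ψ.Inner x, {y | ψ.depOf y ⊆ ψ.dep z \ {x}})
  else {y | y ∈ ψ.U ∪ ψ.E ∧ ψ.depOf y ⊆ ψ.dep x}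

/-- `y ≲_Π x`. -/
def outerLe (ψ : DQBF V) (y x : V) : Prop := y ∈ ψ.Outer x

/-- `D_C`, the union of the dependency sets of the variables of a clause. -/
def depClause (ψ : DQBF V) (C : Clause V) : Finset V := C.biUnion fun l => ψ.depOf l.var

/-- The unit clauses used in the DQRAT side condition: outer literals of `D` negated. -/
def ratUnits (ψ : DQBF V) (D : Clause V) (l : Lit V) : Set (Clause V) :=
  {Dc | ∃ x ∈ D, x ≠ l.negate ∧ outerLe ψ x.var l.var ∧ Dc = ({x.negate} : Clause V)}

/-- DQRAT(D^pu) derivations: sequences of DQBFs, each obtained from the previous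
one by one of the rules ATA, Del, UR, DQRAT∃, DQRAT∀, BPM, D^pu. -/
inductive DQRATDeriv (ψ0 : DQBF V) : DQBF V → ℕ → Prop
  | start : DQRATDeriv ψ0 ψ0 0
  | ata {ψ : DQBF V} {n : ℕ} (C : Clause V) :
      DQRATDeriv ψ0 ψ n → UPBot ((↑ψ.matrix : Set (Clause V)) ∪ negUnits C) →
      DQRATDeriv ψ0 ⟨ψ.U, ψ.E, ψ.dep, insert C ψ.matrix⟩ (n + 1)
  | del {ψ : DQBF V} {n : ℕ} (C : Clause V) :
      DQRATDeriv ψ0 ψ n → C ∈ ψ.matrix →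
      DQRATDeriv ψ0 ⟨ψ.U, ψ.E, ψ.dep, ψ.matrix.erase C⟩ (n + 1)
  | ur {ψ : DQBF V} {n : ℕ} (C : Clause V) (l : Lit V) :
      DQRATDeriv ψ0 ψ n → insert l C ∈ ψ.matrix → l ∉ C → l.var ∈ ψ.U →
      l.var ∉ depClause ψ C →
      DQRATDeriv ψ0 ⟨ψ.U, ψ.E, ψ.dep, insert C (ψ.matrix.erase (insert l C))⟩ (n + 1)
  | ratE {ψ : DQBF V} {n : ℕ} (C : Clause V) (l : Lit V) :
      DQRATDeriv ψ0 ψ n → l.var ∈ ψ.E → l ∉ C →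
      (∀ D ∈ ψ.matrix, l.negate ∈ D →
        UPBot ((↑ψ.matrix : Set (Clause V)) ∪ negUnits (insert l C) ∪ ratUnits ψ D l)) →
      DQRATDeriv ψ0 ⟨ψ.U, ψ.E, ψ.dep, insert (insert l C) ψ.matrix⟩ (n + 1)
  | ratA {ψ : DQBF V} {n : ℕ} (C : Clause V) (l : Lit V) :
      DQRATDeriv ψ0 ψ n → l.var ∈ ψ.U → l ∉ C → insert l C ∈ ψ.matrix →
      (∀ D ∈ ψ.matrix, l.negate ∈ D →
        UPBot ((↑ψ.matrix : Set (Clause V)) ∪ negUnits C ∪ {({l} : Clause V)} ∪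
          ratUnits ψ D l)) →
      DQRATDeriv ψ0 ⟨ψ.U, ψ.E, ψ.dep, insert C (ψ.matrix.erase (insert l C))⟩ (n + 1)
  | bpm {ψ : DQBF V} {n : ℕ} (ψ' : DQBF V) :
      DQRATDeriv ψ0 ψ n → ψ.U ⊆ ψ'.U → ψ.E ⊆ ψ'.E → Disjoint ψ'.U ψ'.E →
      (∀ x ∈ ψ.E, ψ'.dep x = ψ.dep x) → (∀ x ∈ ψ'.E, ψ'.dep x ⊆ ψ'.U) →
      ψ'.matrix = ψ.matrix →
      DQRATDeriv ψ0 ψ' (n + 1)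
  | dpuStep {ψ : DQBF V} {n : ℕ} (ψ' : DQBF V) :
      DQRATDeriv ψ0 ψ n → ψ'.U = ψ.U → ψ'.E = ψ.E → ψ'.matrix = ψ.matrix →
      (∀ u x, x ∈ ψ.E → u ∉ ψ'.dep x → (u ∉ ψ.dep x ∨ ¬ Dpu ψ u x)) →
      DQRATDeriv ψ0 ψ' (n + 1)

/-- A DQRAT(D^pu) refutation of `ψ0` with `n` steps. -/
def DQRATRefutable (ψ0 : DQBF V) (n : ℕ) : Prop :=
  ∃ ψ : DQBF V, DQRATDeriv ψ0 ψ n ∧ (∅ : Clause V) ∈ ψ.matrix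

/-! ## The ts-LQParity formulas -/

inductive PVar : Type where
  | x : ℕ → PVar
  | z : PVar
  | t : ℕ → PVar
  | s : ℕ → PVar
  | b : PVar
deriving DecidableEq

def L (v : PVar) (b : Bool) : Lit PVar := ⟨v, b⟩

/-- The four clauses of `xor_l(o1, o2, o, zl)`. -/
def xorl (o1 o2 o : PVar) (zl : Lit PVar) : Finset (Clause PVar) :=
  { {zl, L o1 false, L o2 false, L o false},
    {zl, L o1 true,  L o2 true,  L o false},
    {zl, L o1 false, L o2 true,  L o true},
    {zl, L o1 true,  L o2 false, L o true} }

def tsMatrix (N : ℕ) : Finset (Clause PVar) :=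
  xorl (.x 1) (.x 2) (.t 2) (L .z true) ∪
    (Finset.Icc 3 N).biUnion (fun i => xorl (.t (i - 1)) (.x i) (.t i) (L .z true)) ∪
    xorl (.x 1) (.x 2) (.s 2) (L .z false) ∪
    (Finset.Icc 3 N).biUnion (fun i => xorl (.s (i - 1)) (.x i) (.s i) (L .z false)) ∪
    {{L .z true, L (.t N) true}, {L .z false, L (.s N) false}}

def tsDep : PVar → Finset PVar
  | .t _ => {.z}
  | .s _ => {.z}
  | .b => {.z}
  | _ => ∅

/-- The QBF ts-LQParity(N), presented as a DQBF. -/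
def tsLQParity (N : ℕ) : DQBF PVar where
  U := {.z}
  E := (Finset.Icc 1 N).image PVar.x ∪ (Finset.Icc 2 N).image PVar.t ∪
    (Finset.Icc 2 N).image PVar.s
  dep := tsDep
  matrix := tsMatrix N

def bridgedMatrix (N : ℕ) : Finset (Clause PVar) :=
  tsMatrix N ∪
    { {L .z true, L (.t N) false, L .b true}, {L .z true, L (.t N) true, L .b false},
      {L .z false, L (.s N) false, L .b true}, {L .z false, L (.s N) true, L .b false} }

/-- The QBF Bridged ts-LQParity(N), presented as a DQBF. -/
def bridged (N : ℕ) : DQBF PVar where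
  U := {.z}
  E := (Finset.Icc 1 N).image PVar.x ∪ (Finset.Icc 2 N).image PVar.t ∪
    (Finset.Icc 2 N).image PVar.s ∪ {.b}
  dep := tsDep
  matrix := bridgedMatrix N

/-! ## The NP-hardness gadget -/

inductive GVar (W : Type) : Type where
  | v : W → GVar W
  | u : GVar W
  | x : GVar W
deriving DecidableEq

/-- The gadget DQBF `∀(V ∪ {u}) ∃x(V ∪ {u}). (⋁_{v ∈ V} v) ∨ u ∨ ¬x`. -/
def gadget {W : Type} [DecidableEq W] (Vs : Finset W) : DQBF (GVar W) where
  U := Vs.image GVar.v ∪ {GVar.u}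
  E := {GVar.x}
  dep := fun y => if y = GVar.x then Vs.image GVar.v ∪ {GVar.u} else ∅
  matrix := {Vs.image (fun w => (⟨GVar.v w, true⟩ : Lit (GVar W))) ∪
    ({⟨GVar.u, true⟩, ⟨GVar.x, false⟩} : Clause (GVar W))}

/-- The Skolem function `f_x = φ(V) ∧ u`. -/
def gadgetSkolem {W : Type} [DecidableEq W] (φ : Finset (Clause W)) :
    GVar W → (GVar W → Bool) → Bool := fun y β =>
  if y = GVar.x then
    (decide (∀ C ∈ φ, ∃ l ∈ C, β (GVar.v l.var) = l.pos)) && β GVar.u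
  else false

/-! ## Auxiliary development for Statement 4 -/

section CompletenessAux

lemma lit_eq_of_var_eq {l : Lit V} {y : V} (h : l.var = y) :
    l = ⟨y, true⟩ ∨ l = ⟨y, false⟩ := by
  rcases l with ⟨v, b⟩
  simp only [Lit.var] at h
  subst h
  cases b
  · exact Or.inr rfl
  · exact Or.inl rfl

lemma sat_mono {β : V → Bool} {C D : Clause V} (h : C ⊆ D) :
    Clause.Sat β C → Clause.Sat β D := fun ⟨l, hl, h2⟩ => ⟨l, h hl, h2⟩

lemma sat_congr {β γ : V → Bool} {C : Clause V} (h : ∀ l ∈ C, β l.var = γ l.var) :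
    Clause.Sat β C → Clause.Sat γ C := fun ⟨l, hl, h2⟩ => ⟨l, hl, (h l hl).symm.trans h2⟩

/-- Plain Q-resolution derivations (no long-distance steps, reduction side
condition formulated directly in terms of the dependency sets). -/
inductive QD (ψ : DQBF V) : Clause V → Prop
  | ax {C : Clause V} : C ∈ ψ.matrix → QD ψ C
  | red {C : Clause V} {w : Lit V} :
      QD ψ (insert w C) → w.var ∈ ψ.U → w ∉ C →
      (∀ l ∈ C, l.var ∈ ψ.E → w.var ∉ ψ.dep l.var) → QD ψ C
  | res {Ec Fc : Clause V} {x : V} :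
      x ∈ ψ.E → QD ψ (insert ⟨x, false⟩ Ec) → QD ψ (insert ⟨x, true⟩ Fc) →
      (⟨x, false⟩ : Lit V) ∉ Ec → (⟨x, true⟩ : Lit V) ∉ Fc →
      (∀ v ∈ Ec, v.var ∈ ψ.U → v.negate ∉ Fc) → QD ψ (Ec ∪ Fc)

/-- Any `QD` derivation is an LDQ(D^pu)-Res derivation. -/
lemma qd_ldq {ψ : DQBF V} {C : Clause V} (h : QD ψ C) : LDQDeriv ψ (Dpu ψ) C := by
  induction h with
  | ax h => exact .ax h
  | red h hU hw hcond ih => exact .red ih hU hw (fun l hl hE hD => hcond l hl hE hD.1)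
  | res hx h1 h2 hE hF hcond ih1 ih2 =>
      exact .res hx ih1 ih2 hE hF (fun v hv hU hneg => absurd hneg (hcond v hv hU))

/-- Composition: `QD` derivations from a formula with shrunk prefix and derivable
matrix clauses yield `QD` derivations in the original formula. -/
lemma qd_comp {ψ ψ' : DQBF V} (hU : ψ'.U ⊆ ψ.U) (hE : ψ'.E ⊆ ψ.E)
    (hdep : ∀ x, ψ'.dep x = ψ.dep x) (hdisj : Disjoint ψ.U ψ.E)
    (hax : ∀ C ∈ ψ'.matrix, QD ψ C ∧ ∀ l ∈ C, l.var ∈ ψ'.U ∪ ψ'.E) :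
    ∀ {C : Clause V}, QD ψ' C → QD ψ C ∧ ∀ l ∈ C, l.var ∈ ψ'.U ∪ ψ'.E := by
  intro C h
  induction h with
  | ax h => exact hax _ h
  | @red C w h hUw hw hcond ih =>
      obtain ⟨ihd, ihv⟩ := ih
      refine ⟨.red ihd (hU hUw) hw ?_, fun l hl => ihv l (Finset.mem_insert_of_mem hl)⟩
      intro l hl hlE
      have hl' : l.var ∈ ψ'.U ∪ ψ'.E := ihv l (Finset.mem_insert_of_mem hl)
      rcases Finset.mem_union.mp hl' with h1 | h1
      · exact absurd hlE (Finset.disjoint_left.mp hdisj (hU h1))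
      · rw [← hdep]; exact hcond l hl h1
  | @res Ec Fc x hx h1 h2 hnE hnF hcond ih1 ih2 =>
      obtain ⟨ihd1, ihv1⟩ := ih1
      obtain ⟨ihd2, ihv2⟩ := ih2
      refine ⟨.res (hE hx) ihd1 ihd2 hnE hnF ?_, ?_⟩
      · intro v hv hvU
        have hv' : v.var ∈ ψ'.U ∪ ψ'.E := ihv1 v (Finset.mem_insert_of_mem hv)
        rcases Finset.mem_union.mp hv' with h1 | h1
        · exact hcond v hv h1
        · exact absurd (hE h1) (Finset.disjoint_left.mp hdisj hvU)
      · intro l hl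
        rcases Finset.mem_union.mp hl with h1 | h1
        · exact ihv1 l (Finset.mem_insert_of_mem h1)
        · exact ihv2 l (Finset.mem_insert_of_mem h1)

/-- Matrix after resolving away the (innermost existential) variable `y`:
clauses not mentioning `y` plus all non-tautological resolvents on `y`. -/
def resolveY (y : V) (p : Clause V × Clause V) : Clause V :=
  p.1.erase ⟨y, false⟩ ∪ p.2.erase ⟨y, true⟩

def elimMatrix (Φ : Finset (Clause V)) (y : V) : Finset (Clause V) :=
  Φ.filter (fun C => (⟨y, true⟩ : Lit V) ∉ C ∧ (⟨y, false⟩ : Lit V) ∉ C) ∪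
    ((Φ ×ˢ Φ).filter (fun p =>
        (⟨y, false⟩ : Lit V) ∈ p.1 ∧ (⟨y, true⟩ : Lit V) ∉ p.1 ∧
        (⟨y, true⟩ : Lit V) ∈ p.2 ∧ (⟨y, false⟩ : Lit V) ∉ p.2 ∧
        ∀ l ∈ resolveY y p, l.negate ∉ resolveY y p)).image (resolveY y)

/-- Matrix after reducing away the (innermost universal) variable `y`:
drop `y`-tautological clauses and delete `y`-literals elsewhere. -/
def uMatrix (Φ : Finset (Clause V)) (y : V) : Finset (Clause V) :=
  (Φ.filter (fun C => ¬((⟨y, true⟩ : Lit V) ∈ C ∧ (⟨y, false⟩ : Lit V) ∈ C))).image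
    (fun C => C.filter (fun l => l.var ≠ y))

lemma isTrue_of_matrix_empty {ψ : DQBF V} (h : ψ.matrix = ∅) : ψ.IsTrue :=
  ⟨fun _ _ => false, fun _ _ _ _ _ => rfl, fun β C hC => absurd hC (by simp [h])⟩

/-- Base case: no variables at all. -/
lemma qd_base {ψ : DQBF V} (hWF : ψ.WF) (hempty : ψ.U ∪ ψ.E = ∅)
    (hfalse : ¬ ψ.IsTrue) : QD ψ ∅ := by
  rcases Finset.eq_empty_or_nonempty ψ.matrix with h | ⟨C, hC⟩
  · exact absurd (isTrue_of_matrix_empty h) hfalse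
  · have hCe : C = ∅ := by
      apply Finset.eq_empty_of_forall_notMem
      intro l hl
      have := hWF.2.2 C hC l hl
      rw [hempty] at this
      exact absurd this (Finset.notMem_empty _)
    exact hCe ▸ QD.ax hC

/-- Truth transfer for universal elimination. -/
lemma univ_elim_true {ψ : DQBF V} {y : V} (hyU : y ∈ ψ.U) (hyE : y ∉ ψ.E)
    (hT : (DQBF.mk (ψ.U.erase y) ψ.E ψ.dep (uMatrix ψ.matrix y)).IsTrue) :
    ψ.IsTrue := by
  obtain ⟨f, hresp, hsat⟩ := hT
  refine ⟨f, hresp, ?_⟩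
  intro β C hC
  by_cases htaut : (⟨y, true⟩ : Lit V) ∈ C ∧ (⟨y, false⟩ : Lit V) ∈ C
  · refine ⟨⟨y, β y⟩, ?_, ?_⟩
    · cases hb : β y
      · exact htaut.2
      · exact htaut.1
    · show (if y ∈ ψ.E then f y β else β y) = β y
      rw [if_neg hyE]
  · have hmem : C.filter (fun l => l.var ≠ y) ∈ uMatrix ψ.matrix y :=
      Finset.mem_image.mpr ⟨C, Finset.mem_filter.mpr ⟨hC, htaut⟩, rfl⟩
    have := hsat β _ hmem
    exact sat_mono (Finset.filter_subset _ _) this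

/-- Truth transfer for existential elimination (Davis–Putnam on an innermost
existential variable). -/
lemma ex_elim_true {ψ : DQBF V} {y : V} (hWF : ψ.WF) (hyE : y ∈ ψ.E)
    (hdepy : ∀ u ∈ ψ.U, u ∈ ψ.dep y)
    (hT : (DQBF.mk ψ.U (ψ.E.erase y) ψ.dep (elimMatrix ψ.matrix y)).IsTrue) :
    ψ.IsTrue := by
  classical
  obtain ⟨f', hresp', hsat'⟩ := hT
  set ψ' : DQBF V := DQBF.mk ψ.U (ψ.E.erase y) ψ.dep (elimMatrix ψ.matrix y) with hψ'
  set σ : (V → Bool) → V → Bool := fun β => ψ'.Completed f' β with hσ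
  set P : (V → Bool) → Prop := fun β =>
    ∃ C ∈ ψ.matrix, (⟨y, true⟩ : Lit V) ∈ C ∧ (⟨y, false⟩ : Lit V) ∉ C ∧
      ¬ Clause.Sat (σ β) (C.erase ⟨y, true⟩) with hP
  set f : V → (V → Bool) → Bool :=
    fun v β => if v = y then (if P β then true else false) else f' v β with hf
  -- agreement of σ on variables other than y, for assignments agreeing on U
  have hσagree : ∀ β γ : V → Bool, (∀ u ∈ ψ.U, β u = γ u) →
      ∀ v, v ∈ ψ.U ∪ ψ.E.erase y → σ β v = σ γ v := by
    intro β γ hβγ v hv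
    rcases Finset.mem_union.mp hv with h1 | h1
    · have hvE : v ∉ ψ.E.erase y :=
        fun h => Finset.disjoint_left.mp hWF.1 h1 (Finset.mem_of_mem_erase h)
      show (if v ∈ ψ.E.erase y then f' v β else β v) =
        (if v ∈ ψ.E.erase y then f' v γ else γ v)
      rw [if_neg hvE, if_neg hvE]
      exact hβγ v h1
    · show (if v ∈ ψ.E.erase y then f' v β else β v) =
        (if v ∈ ψ.E.erase y then f' v γ else γ v)
      rw [if_pos h1, if_pos h1]
      exact hresp' v h1 β γ (fun u hu =>
        hβγ u (hWF.2.1 v (Finset.mem_of_mem_erase h1) hu))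
  refine ⟨f, ?_, ?_⟩
  · -- Respects
    intro x hx β γ hβγ
    by_cases hxy : x = y
    · have hU : ∀ u ∈ ψ.U, β u = γ u := fun u hu =>
        hβγ u (by rw [hxy]; exact hdepy u hu)
      have hPP : P β ↔ P γ := by
        constructor <;> intro hp
        all_goals {
          obtain ⟨C, hC, h1, h0, hns⟩ := hp
          refine ⟨C, hC, h1, h0, fun hs => hns ?_⟩
          refine sat_congr (fun l hl => ?_) hs
          have hlC := Finset.mem_of_mem_erase hl
          have hlvar : l.var ∈ ψ.U ∪ ψ.E := hWF.2.2 C hC l hlC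
          have hlny : l.var ≠ y := by
            intro h
            rcases lit_eq_of_var_eq h with h | h
            · exact (Finset.ne_of_mem_erase hl) h
            · exact h0 (h ▸ hlC)
          have : l.var ∈ ψ.U ∪ ψ.E.erase y := by
            rcases Finset.mem_union.mp hlvar with h | h
            · exact Finset.mem_union_left _ h
            · exact Finset.mem_union_right _ (Finset.mem_erase.mpr ⟨hlny, h⟩)
          first
            | exact (hσagree β γ hU l.var this).symm
            | exact hσagree β γ hU l.var this }
      show (if x = y then (if P β then true else false) else f' x β) =
        (if x = y then (if P γ then true else false) else f' x γ)
      rw [if_pos hxy, if_pos hxy]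
      by_cases hb : P β
      · rw [if_pos hb, if_pos (hPP.mp hb)]
      · rw [if_neg hb, if_neg (fun h => hb (hPP.mpr h))]
    · show (if x = y then _ else _) = (if x = y then _ else _)
      rw [if_neg hxy, if_neg hxy]
      exact hresp' x (Finset.mem_erase.mpr ⟨hxy, hx⟩) β γ hβγ
  · -- every clause is satisfied
    intro β C hC
    set cmp := ψ.Completed f β with hcmp
    have hcmpy : cmp y = (if P β then true else false) := by
      show (if y ∈ ψ.E then f y β else β y) = _
      rw [if_pos hyE]
      show (if y = y then _ else _) = _
      rw [if_pos rfl]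
    have hagree : ∀ v, v ≠ y → cmp v = σ β v := by
      intro v hv
      show (if v ∈ ψ.E then f v β else β v) = (if v ∈ ψ.E.erase y then f' v β else β v)
      by_cases hvE : v ∈ ψ.E
      · rw [if_pos hvE, if_pos (Finset.mem_erase.mpr ⟨hv, hvE⟩)]
        show (if v = y then _ else _) = _
        rw [if_neg hv]
      · rw [if_neg hvE, if_neg (fun h => hvE (Finset.mem_of_mem_erase h))]
    have hsub : ∀ {C' : Clause V}, C' ⊆ C → (∀ l ∈ C', l.var ≠ y) →
        Clause.Sat (σ β) C' → Clause.Sat cmp C := by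
      rintro C' hsubs hvars ⟨l, hl, hlsat⟩
      exact ⟨l, hsubs hl, (hagree l.var (hvars l hl)).trans hlsat⟩
    by_cases h1 : (⟨y, true⟩ : Lit V) ∈ C <;> by_cases h0 : (⟨y, false⟩ : Lit V) ∈ C
    · -- tautological in y
      by_cases hPb : P β
      · exact ⟨⟨y, true⟩, h1, by rw [hcmpy, if_pos hPb]⟩
      · exact ⟨⟨y, false⟩, h0, by rw [hcmpy, if_neg hPb]⟩
    · -- positive occurrence only
      by_cases hPb : P β
      · exact ⟨⟨y, true⟩, h1, by rw [hcmpy, if_pos hPb]⟩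
      · have hs : Clause.Sat (σ β) (C.erase ⟨y, true⟩) := by
          by_contra hns
          exact hPb ⟨C, hC, h1, h0, hns⟩
        refine hsub (Finset.erase_subset _ _) ?_ hs
        intro l hl hly
        rcases lit_eq_of_var_eq hly with h | h
        · exact (Finset.ne_of_mem_erase hl) h
        · exact h0 (h ▸ Finset.mem_of_mem_erase hl)
    · -- negative occurrence only
      by_cases hPb : P β
      · obtain ⟨D, hD, hD1, hD0, hDns⟩ := hPb
        set Ec := C.erase ⟨y, false⟩ with hEc
        set Fc := D.erase ⟨y, true⟩ with hFc
        set R := Ec ∪ Fc with hR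
        have hmR : ∃ m ∈ Ec, σ β m.var = m.pos := by
          by_cases htaut : ∀ l ∈ R, l.negate ∉ R
          · have hmem : R ∈ elimMatrix ψ.matrix y := by
              refine Finset.mem_union_right _ (Finset.mem_image.mpr ⟨(C, D), ?_, rfl⟩)
              exact Finset.mem_filter.mpr
                ⟨Finset.mem_product.mpr ⟨hC, hD⟩, h0, h1, hD1, hD0, htaut⟩
            obtain ⟨m, hmR, hm⟩ := hsat' β R hmem
            have hmE : m ∈ Ec := by
              rcases Finset.mem_union.mp hmR with h | h
              · exact h
              · exact absurd ⟨m, h, hm⟩ hDns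
            exact ⟨m, hmE, hm⟩
          · push_neg at htaut
            obtain ⟨l, hlR, hlnR⟩ := htaut
            have : σ β l.var = l.pos ∨ σ β l.negate.var = l.negate.pos := by
              show σ β l.var = l.pos ∨ σ β l.var = !l.pos
              cases h : σ β l.var <;> cases h2 : l.pos <;> simp
            rcases this with h | h
            · refine ⟨l, ?_, h⟩
              rcases Finset.mem_union.mp hlR with hm | hm
              · exact hm
              · exact absurd ⟨l, hm, h⟩ hDns
            · refine ⟨l.negate, ?_, h⟩
              rcases Finset.mem_union.mp hlnR with hm | hm
              · exact hm
              · exact absurd ⟨l.negate, hm, h⟩ hDns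
        obtain ⟨m, hmE, hm⟩ := hmR
        have hmC : m ∈ C := Finset.mem_of_mem_erase hmE
        have hmy : m.var ≠ y := by
          intro h
          rcases lit_eq_of_var_eq h with h | h
          · exact h1 (h ▸ hmC)
          · exact (Finset.ne_of_mem_erase hmE) h
        exact ⟨m, hmC, (hagree m.var hmy).trans hm⟩
      · exact ⟨⟨y, false⟩, h0, by rw [hcmpy, if_neg hPb]⟩
    · -- no occurrence of y
      have hmem : C ∈ elimMatrix ψ.matrix y :=
        Finset.mem_union_left _ (Finset.mem_filter.mpr ⟨hC, h1, h0⟩)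
      refine hsub (Finset.Subset.refl _) ?_ (hsat' β C hmem)
      intro l hl hly
      rcases lit_eq_of_var_eq hly with h | h
      · exact h1 (h ▸ hl)
      · exact h0 (h ▸ hl)

lemma filter_eq_erase {C : Clause V} {y : V} {b : Bool}
    (hb : (⟨y, b⟩ : Lit V) ∈ C) (hnb : (⟨y, !b⟩ : Lit V) ∉ C) :
    C.filter (fun l => l.var ≠ y) = C.erase ⟨y, b⟩ := by
  ext l
  simp only [Finset.mem_filter, Finset.mem_erase]
  constructor
  · rintro ⟨hlC, hly⟩
    exact ⟨fun h => hly (by rw [h]), hlC⟩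
  · rintro ⟨hne, hlC⟩
    refine ⟨hlC, fun h => ?_⟩
    rcases lit_eq_of_var_eq h with h | h <;> cases b
    · exact hnb (h ▸ hlC)
    · exact hne h
    · exact hne h
    · exact hnb (h ▸ hlC)

lemma filter_eq_self_of_no_y {C : Clause V} {y : V}
    (h1 : (⟨y, true⟩ : Lit V) ∉ C) (h0 : (⟨y, false⟩ : Lit V) ∉ C) :
    C.filter (fun l => l.var ≠ y) = C := by
  refine Finset.filter_eq_self.mpr (fun l hl h => ?_)
  rcases lit_eq_of_var_eq h with h | h
  · exact h1 (h ▸ hl)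
  · exact h0 (h ▸ hl)

/-- Clauses of `uMatrix` are derivable by a single universal reduction. -/
lemma uMatrix_derivable {ψ : DQBF V} {y : V} (hWF : ψ.WF) (hyU : y ∈ ψ.U)
    (hyndep : ∀ x ∈ ψ.E, y ∉ ψ.dep x) :
    ∀ C' ∈ uMatrix ψ.matrix y, QD ψ C' ∧ ∀ l ∈ C', l.var ∈ ψ.U.erase y ∪ ψ.E := by
  intro C' hC'
  obtain ⟨C, hCf, rfl⟩ := Finset.mem_image.mp hC'
  obtain ⟨hC, hnt⟩ := Finset.mem_filter.mp hCf
  constructor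
  · by_cases h1 : (⟨y, true⟩ : Lit V) ∈ C <;> by_cases h0 : (⟨y, false⟩ : Lit V) ∈ C
    · exact absurd ⟨h1, h0⟩ hnt
    · rw [filter_eq_erase h1 h0]
      refine QD.red (w := ⟨y, true⟩) ?_ hyU (Finset.notMem_erase _ _) ?_
      · rw [Finset.insert_erase h1]; exact QD.ax hC
      · exact fun l _ hE => hyndep l.var hE
    · rw [filter_eq_erase h0 h1]
      refine QD.red (w := ⟨y, false⟩) ?_ hyU (Finset.notMem_erase _ _) ?_
      · rw [Finset.insert_erase h0]; exact QD.ax hC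
      · exact fun l _ hE => hyndep l.var hE
    · rw [filter_eq_self_of_no_y h1 h0]; exact QD.ax hC
  · intro l hl
    obtain ⟨hlC, hly⟩ := Finset.mem_filter.mp hl
    rcases Finset.mem_union.mp (hWF.2.2 C hC l hlC) with h | h
    · exact Finset.mem_union_left _ (Finset.mem_erase.mpr ⟨hly, h⟩)
    · exact Finset.mem_union_right _ h

/-- Clauses of `elimMatrix` are derivable by at most one resolution step. -/
lemma elimMatrix_derivable {ψ : DQBF V} {y : V} (hWF : ψ.WF) (hyE : y ∈ ψ.E) :
    ∀ C' ∈ elimMatrix ψ.matrix y, QD ψ C' ∧ ∀ l ∈ C', l.var ∈ ψ.U ∪ ψ.E.erase y := by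
  intro C' hC'
  rcases Finset.mem_union.mp hC' with h | h
  · obtain ⟨hC, h1, h0⟩ := Finset.mem_filter.mp h
    refine ⟨QD.ax hC, fun l hl => ?_⟩
    have hly : l.var ≠ y := by
      intro h
      rcases lit_eq_of_var_eq h with h | h
      · exact h1 (h ▸ hl)
      · exact h0 (h ▸ hl)
    rcases Finset.mem_union.mp (hWF.2.2 C' hC l hl) with h | h
    · exact Finset.mem_union_left _ h
    · exact Finset.mem_union_right _ (Finset.mem_erase.mpr ⟨hly, h⟩)
  · obtain ⟨⟨C, D⟩, hfilt, rfl⟩ := Finset.mem_image.mp h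
    obtain ⟨hprod, hc0, hc1, hd1, hd0, hnt⟩ := Finset.mem_filter.mp hfilt
    obtain ⟨hC, hD⟩ := Finset.mem_product.mp hprod
    constructor
    · refine QD.res hyE ?_ ?_ (Finset.notMem_erase _ _) (Finset.notMem_erase _ _) ?_
      · rw [Finset.insert_erase hc0]; exact QD.ax hC
      · rw [Finset.insert_erase hd1]; exact QD.ax hD
      · intro v hv _ hneg
        exact hnt v (Finset.mem_union_left _ hv) (Finset.mem_union_right _ hneg)
    · intro l hl
      have hlvar : l.var ∈ ψ.U ∪ ψ.E ∧ l.var ≠ y := by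
        rcases Finset.mem_union.mp hl with hm | hm
        · refine ⟨hWF.2.2 C hC l (Finset.mem_of_mem_erase hm), fun h => ?_⟩
          rcases lit_eq_of_var_eq h with h | h
          · exact hc1 (h ▸ Finset.mem_of_mem_erase hm)
          · exact (Finset.ne_of_mem_erase hm) h
        · refine ⟨hWF.2.2 D hD l (Finset.mem_of_mem_erase hm), fun h => ?_⟩
          rcases lit_eq_of_var_eq h with h | h
          · exact (Finset.ne_of_mem_erase hm) h
          · exact hd0 (h ▸ Finset.mem_of_mem_erase hm)
      rcases Finset.mem_union.mp hlvar.1 with h | h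
      · exact Finset.mem_union_left _ h
      · exact Finset.mem_union_right _ (Finset.mem_erase.mpr ⟨hlvar.2, h⟩)

/-- Completeness of plain Q-resolution, by induction on the number of variables. -/
lemma qd_complete (n : ℕ) : ∀ ψ : QBF V, (ψ.U ∪ ψ.E).card ≤ n → ψ.WF →
    ¬ ψ.toDQBF.IsTrue → QD ψ.toDQBF ∅ := by
  induction n with
  | zero =>
      intro ψ hc hWF hf
      exact qd_base hWF.1 (Finset.card_eq_zero.mp (Nat.le_zero.mp hc)) hf
  | succ n ih =>
      intro ψ hc hWF hf
      rcases Finset.eq_empty_or_nonempty (ψ.U ∪ ψ.E) with he | hne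
      · exact qd_base hWF.1 he hf
      obtain ⟨y, hy, hmax⟩ := Finset.exists_max_image (ψ.U ∪ ψ.E) ψ.ord hne
      have hcard_erase : ((ψ.U ∪ ψ.E).erase y).card ≤ n := by
        rw [Finset.card_erase_of_mem hy]
        omega
      rcases Finset.mem_union.mp hy with hyU | hyE
      · -- y is an innermost universal variable
        have hyE : y ∉ ψ.E := fun h => Finset.disjoint_left.mp hWF.1.1 hyU h
        have hyndep : ∀ x ∈ ψ.E, y ∉ ψ.dep x := by
          intro x hx hdep
          have h1 := (hWF.2.2 x hx y).mp hdep
          exact absurd h1.2 (not_lt.mpr (hmax x (Finset.mem_union_right _ hx)))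
        set ψ' : QBF V := ⟨⟨ψ.U.erase y, ψ.E, ψ.dep, uMatrix ψ.matrix y⟩, ψ.ord⟩ with hψ'
        have hUE : ψ'.U ∪ ψ'.E = (ψ.U ∪ ψ.E).erase y := by
          show ψ.U.erase y ∪ ψ.E = _
          rw [Finset.erase_union_distrib, Finset.erase_eq_of_notMem hyE]
        have hsubUE : ψ'.U ∪ ψ'.E ⊆ ψ.U ∪ ψ.E := by
          rw [hUE]; exact Finset.erase_subset _ _
        have hder := uMatrix_derivable hWF.1 hyU hyndep
        have hWF' : ψ'.WF := by
          refine ⟨⟨Finset.disjoint_of_subset_left (Finset.erase_subset _ _) hWF.1.1,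
            ?_, ?_⟩, ?_, ?_⟩
          · intro x hx u hu
            exact Finset.mem_erase.mpr
              ⟨fun h => hyndep x hx (h ▸ hu), hWF.1.2.1 x hx hu⟩
          · exact fun C hC l hl => (hder C hC).2 l hl
          · exact fun a ha b hb => hWF.2.1 a (hsubUE ha) b (hsubUE hb)
          · intro x hx u
            constructor
            · intro hu
              have h1 := (hWF.2.2 x hx u).mp hu
              exact ⟨Finset.mem_erase.mpr ⟨fun h => hyndep x hx (h ▸ hu), h1.1⟩, h1.2⟩
            · rintro ⟨hu, hlt⟩
              exact (hWF.2.2 x hx u).mpr ⟨Finset.mem_of_mem_erase hu, hlt⟩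
        have hf' : ¬ ψ'.toDQBF.IsTrue := fun h => hf (univ_elim_true hyU hyE h)
        have h0 := ih ψ' (hUE ▸ hcard_erase) hWF' hf'
        exact (qd_comp (ψ := ψ.toDQBF) (ψ' := ψ'.toDQBF) (Finset.erase_subset _ _)
          (Finset.Subset.refl _) (fun _ => rfl) hWF.1.1 hder h0).1
      · -- y is an innermost existential variable
        have hyU : y ∉ ψ.U := fun h => Finset.disjoint_left.mp hWF.1.1 h hyE
        have hdepy : ∀ u ∈ ψ.U, u ∈ ψ.dep y := by
          intro u hu
          have hne : u ≠ y := fun h => hyU (h ▸ hu)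
          have hlt : ψ.ord u < ψ.ord y := by
            refine lt_of_le_of_ne (hmax u (Finset.mem_union_left _ hu)) (fun h => ?_)
            exact hne (hWF.2.1 u (Finset.mem_union_left _ hu) y hy h)
          exact (hWF.2.2 y hyE u).mpr ⟨hu, hlt⟩
        set ψ' : QBF V := ⟨⟨ψ.U, ψ.E.erase y, ψ.dep, elimMatrix ψ.matrix y⟩, ψ.ord⟩
          with hψ'
        have hUE : ψ'.U ∪ ψ'.E = (ψ.U ∪ ψ.E).erase y := by
          show ψ.U ∪ ψ.E.erase y = _
          rw [Finset.erase_union_distrib, Finset.erase_eq_of_notMem hyU]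
        have hsubUE : ψ'.U ∪ ψ'.E ⊆ ψ.U ∪ ψ.E := by
          rw [hUE]; exact Finset.erase_subset _ _
        have hder := elimMatrix_derivable hWF.1 hyE
        have hWF' : ψ'.WF := by
          refine ⟨⟨Finset.disjoint_of_subset_right (Finset.erase_subset _ _) hWF.1.1,
            ?_, ?_⟩, ?_, ?_⟩
          · exact fun x hx => hWF.1.2.1 x (Finset.mem_of_mem_erase hx)
          · exact fun C hC l hl => (hder C hC).2 l hl
          · exact fun a ha b hb => hWF.2.1 a (hsubUE ha) b (hsubUE hb)
          · exact fun x hx => hWF.2.2 x (Finset.mem_of_mem_erase hx)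
        have hf' : ¬ ψ'.toDQBF.IsTrue := fun h => hf (ex_elim_true hWF.1 hyE hdepy h)
        have h0 := ih ψ' (hUE ▸ hcard_erase) hWF' hf'
        exact (qd_comp (ψ := ψ.toDQBF) (ψ' := ψ'.toDQBF) (Finset.Subset.refl _)
          (Finset.erase_subset _ _) (fun _ => rfl) hWF.1.1 hder h0).1

end CompletenessAux

/-- Completeness of LDQ(D^pu)-Res. Every false QBF has an
LDQ(D^pu)-Res refutation. -/
theorem ldq_dpu_complete {V : Type} [DecidableEq V] (ψ : QBF V) (hWF : ψ.WF)
    (hfalse : ¬ ψ.toDQBF.IsTrue) :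
    LDQDeriv ψ.toDQBF (Dpu ψ.toDQBF) (∅ : Clause V) :=
  qd_ldq (qd_complete (ψ.U ∪ ψ.E).card ψ le_rfl hWF hfalse)
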